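/- Let γ > 0 and ψ ∈ 𝔐_γ(ℝ^d). Then for any s ∈ ℝ, there exists a constant C > 0 such that for all ξ ∈ ℝ^d with ξ ≠ 0 and all multi-indices α with |α| ≤ ⌊d/2⌋ + 1, |∂_ξ^α((1 + ψ(ξ))^s)| ≤ C |ξ|^{−|α|} (1 + ψ(ξ))^s. -/

import Mathlib

open scoped BigOperators

/-- The partial derivative of `f : ℝ^d → F` in the `i`-th coordinate direction. -/
noncomputable def pderivI {d : ℕ} {F : Type*} [NormedAddCommGroup F] [NormedSpace ℝ F]
    (i : Fin d) (f : EuclideanSpace ℝ (Fin d) → F) :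
    EuclideanSpace ℝ (Fin d) → F :=
  fun x => fderiv ℝ f x (EuclideanSpace.single i 1)

/-- The mixed partial derivative `∂^α f` for a multi-index `α : Fin d → ℕ`. -/
noncomputable def mderiv {d : ℕ} {F : Type*} [NormedAddCommGroup F] [NormedSpace ℝ F]
    (α : Fin d → ℕ) (f : EuclideanSpace ℝ (Fin d) → F) :
    EuclideanSpace ℝ (Fin d) → F :=
  (List.ofFn (fun i : Fin d => (pderivI i)^[α i])).foldr (fun g h => g h) f

/-!
By induction on the order of differentiation, `∂^L (φ ^ s)` with `φ = 1 + ψ` is a finite linear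
combination of terms `φ ^ (s - k) * ∂^{β₁} φ ⋯ ∂^{β_k} φ` with `|β₁| + ⋯ + |β_k| = |L|` (a Faà di
Bruno expansion; the order in which the partial derivatives are taken is irrelevant by the symmetry
of second derivatives). Since `‖ξ‖ ^ γ ≤ ψ ξ / κ`, every factor satisfies
`|∂^β φ| ≤ μ ‖ξ‖ ^ (γ - |β|) ≤ φ * (M / ‖ξ‖) ^ |β|` with `M = max 1 (μ / κ)`, so the `k` factors
absorb `φ ^ (-k)` and each term is `O(‖ξ‖ ^ (-|L|) * φ ^ s)`; the coefficients grow at most like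
`(|s| + 2|L|) ^ |L|`.
-/

open scoped ContDiff

section PDerivList

variable {d : ℕ} {F : Type*} [NormedAddCommGroup F] [NormedSpace ℝ F]

local notation "E" => EuclideanSpace ℝ (Fin d)

noncomputable def pderivList (L : List (Fin d)) (f : E → F) : E → F :=
  L.foldr pderivI f

@[simp]
theorem pderivList_nil (f : E → F) : pderivList [] f = f := rfl

@[simp]
theorem pderivList_cons (i : Fin d) (L : List (Fin d)) (f : E → F) :
    pderivList (i :: L) f = pderivI i (pderivList L f) := rfl

theorem iterate_pderivI (i : Fin d) (n : ℕ) (f : E → F) :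
    (pderivI i)^[n] f = pderivList (List.replicate n i) f := by
  induction n with
  | zero => rfl
  | succ n ih => rw [Function.iterate_succ_apply', ih]; rfl

def multiIndexList (α : Fin d → ℕ) : List (Fin d) :=
  (List.ofFn fun i => List.replicate (α i) i).flatten

theorem length_multiIndexList (α : Fin d → ℕ) : (multiIndexList α).length = ∑ i, α i := by
  simp [multiIndexList, List.sum_ofFn]

theorem count_multiIndexList (α : Fin d → ℕ) (j : Fin d) : (multiIndexList α).count j = α j := by
  simp [multiIndexList, List.count_flatten, List.sum_ofFn, List.count_replicate]

theorem mderiv_eq_pderivList (α : Fin d → ℕ) (f : E → F) :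
    mderiv α f = pderivList (multiIndexList α) f := by
  have h : (List.ofFn fun i => (pderivI (F := F) i)^[α i])
      = (List.ofFn fun i => List.replicate (α i) i).map pderivList := by
    simp only [List.map_ofFn]
    congr 1
    funext i
    exact funext (iterate_pderivI i (α i))
  rw [mderiv, h, List.foldr_map, multiIndexList, pderivList, List.foldr_flatten]
  rfl

theorem pderivI_const_add (i : Fin d) (c : F) (f : E → F) :
    pderivI i (fun x => c + f x) = pderivI i f := by
  funext x
  simp only [pderivI, fderiv_const_add]

theorem pderivList_const_add {L : List (Fin d)} (hL : L ≠ []) (c : F) (f : E → F) :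
    pderivList L (fun x => c + f x) = pderivList L f := by
  induction L with
  | nil => exact absurd rfl hL
  | cons i L ih =>
    rcases eq_or_ne L [] with rfl | hL'
    · exact pderivI_const_add i c f
    · rw [pderivList_cons, pderivList_cons, ih hL']

variable {U : Set (EuclideanSpace ℝ (Fin d))} {f g : EuclideanSpace ℝ (Fin d) → F}
  {x : EuclideanSpace ℝ (Fin d)}

theorem ContDiffOn.pderivI (hU : IsOpen U) (hf : ContDiffOn ℝ ∞ f U) (i : Fin d) :
    ContDiffOn ℝ ∞ (pderivI i f) U :=
  (hf.fderiv_of_isOpen hU (by simp)).clm_apply contDiffOn_const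

theorem ContDiffOn.pderivList (hU : IsOpen U) (hf : ContDiffOn ℝ ∞ f U) (L : List (Fin d)) :
    ContDiffOn ℝ ∞ (pderivList L f) U := by
  induction L with
  | nil => exact hf
  | cons i L ih => exact ih.pderivI hU i

theorem pderivI_congr_of_eqOn (hU : IsOpen U) (h : Set.EqOn f g U) (hx : x ∈ U) (i : Fin d) :
    pderivI i f x = pderivI i g x := by
  simp only [pderivI, (h.eventuallyEq_of_mem (hU.mem_nhds hx)).fderiv_eq]

theorem pderivI_add (hf : DifferentiableAt ℝ f x) (hg : DifferentiableAt ℝ g x) (i : Fin d) :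
    pderivI i (fun y => f y + g y) x = pderivI i f x + pderivI i g x := by
  simp only [pderivI, fderiv_fun_add hf hg, add_apply]

theorem pderivI_comm (hf : ContDiffAt ℝ 2 f x) (i j : Fin d) :
    pderivI i (pderivI j f) x = pderivI j (pderivI i f) x := by
  have hdf : DifferentiableAt ℝ (fderiv ℝ f) x :=
    (hf.fderiv_right (m := 1) le_rfl).differentiableAt one_ne_zero
  have hsecond : ∀ v w : E, fderiv ℝ (fun y => fderiv ℝ f y v) x w = fderiv ℝ (fderiv ℝ f) x w v :=
    fun v w => by simp [fderiv_clm_apply hdf (differentiableAt_const v)]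
  change fderiv ℝ (fun y => fderiv ℝ f y _) x _ = fderiv ℝ (fun y => fderiv ℝ f y _) x _
  rw [hsecond, hsecond]
  exact hf.isSymmSndFDerivAt (by simp [minSmoothness_of_isRCLikeNormedField]) _ _

theorem pderivList_eqOn_of_perm (hU : IsOpen U) (hf : ContDiffOn ℝ ∞ f U) {L L' : List (Fin d)}
    (h : L.Perm L') : Set.EqOn (pderivList L f) (pderivList L' f) U := by
  induction h with
  | nil => exact Set.eqOn_refl _ _
  | cons i _ ih => exact fun x hx => pderivI_congr_of_eqOn hU ih hx i
  | swap i j L =>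
    exact fun x hx => pderivI_comm
      (((hf.pderivList hU L).contDiffAt (hU.mem_nhds hx)).of_le (WithTop.coe_le_coe.2 le_top)) j i
  | trans _ _ ih₁ ih₂ => exact ih₁.trans ih₂

theorem pderivList_eqOn_mderiv_count (hU : IsOpen U) (hf : ContDiffOn ℝ ∞ f U)
    (L : List (Fin d)) : Set.EqOn (pderivList L f) (mderiv (fun i => L.count i) f) U := by
  rw [mderiv_eq_pderivList]
  exact pderivList_eqOn_of_perm hU hf
    (List.perm_iff_count.2 fun i => (count_multiIndexList (fun i => L.count i) i).symm)

end PDerivList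

section Calculus

variable {d : ℕ} {f g : EuclideanSpace ℝ (Fin d) → ℝ} {x : EuclideanSpace ℝ (Fin d)}

theorem pderivI_mul (hf : DifferentiableAt ℝ f x) (hg : DifferentiableAt ℝ g x) (i : Fin d) :
    pderivI i (fun y => f y * g y) x = pderivI i f x * g x + f x * pderivI i g x := by
  simp only [pderivI, fderiv_fun_mul hf hg, add_apply, smul_apply, smul_eq_mul]
  ring

theorem pderivI_const_mul (hf : DifferentiableAt ℝ f x) (c : ℝ) (i : Fin d) :
    pderivI i (fun y => c * f y) x = c * pderivI i f x := by
  simp only [pderivI, fderiv_const_mul hf, smul_apply, smul_eq_mul]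

theorem pderivI_rpow_const (hf : DifferentiableAt ℝ f x) (hx : f x ≠ 0) (p : ℝ) (i : Fin d) :
    pderivI i (fun y => f y ^ p) x = p * f x ^ (p - 1) * pderivI i f x := by
  simp only [pderivI, (hf.hasFDerivAt.rpow_const (Or.inl hx)).fderiv, smul_apply, smul_eq_mul]

end Calculus

section RpowExpansion

variable {d : ℕ}

local notation "E" => EuclideanSpace ℝ (Fin d)

local notation "Term" => ℝ × List (List (Fin d))

noncomputable def prodPDeriv (φ : E → ℝ) (B : List (List (Fin d))) (x : E) : ℝ :=
  (B.map fun β => pderivList β φ x).prod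

def leibnizTerms (i : Fin d) : List (List (Fin d)) → List (List (List (Fin d)))
  | [] => []
  | β :: B => ((i :: β) :: B) :: (leibnizTerms i B).map (β :: ·)

/-- The term `(c, B)` stands for `c * φ ^ (s - #B) * ∏_{β ∈ B} ∂^β φ`. -/
noncomputable def termValue (φ : E → ℝ) (s : ℝ) (t : Term) (x : E) : ℝ :=
  t.1 * (φ x ^ (s - t.2.length) * prodPDeriv φ t.2 x)

noncomputable def termsValue (φ : E → ℝ) (s : ℝ) (T : List Term) (x : E) : ℝ :=
  (T.map fun t => termValue φ s t x).sum

noncomputable def pderivTerm (s : ℝ) (i : Fin d) (t : Term) : List Term :=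
  ((s - t.2.length) * t.1, [i] :: t.2) :: (leibnizTerms i t.2).map (t.1, ·)

noncomputable def rpowTerms (s : ℝ) (L : List (Fin d)) : List Term :=
  L.foldr (fun i T => T.flatMap (pderivTerm s i)) [(1, [])]

theorem length_leibnizTerms (i : Fin d) (B : List (List (Fin d))) :
    (leibnizTerms i B).length = B.length := by
  induction B with
  | nil => rfl
  | cons β B ih => simp [leibnizTerms, ih]

theorem length_of_mem_leibnizTerms {i : Fin d} {B B' : List (List (Fin d))}
    (h : B' ∈ leibnizTerms i B) : B'.length = B.length := by
  induction B generalizing B' with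
  | nil => simp [leibnizTerms] at h
  | cons β B ih =>
    simp only [leibnizTerms, List.mem_cons, List.mem_map] at h
    rcases h with rfl | ⟨B'', hB'', rfl⟩
    · rfl
    · simp [ih hB'']

theorem sum_length_of_mem_leibnizTerms {i : Fin d} {B B' : List (List (Fin d))}
    (h : B' ∈ leibnizTerms i B) :
    (B'.map List.length).sum = (B.map List.length).sum + 1 := by
  induction B generalizing B' with
  | nil => simp [leibnizTerms] at h
  | cons β B ih =>
    simp only [leibnizTerms, List.mem_cons, List.mem_map] at h
    rcases h with rfl | ⟨B'', hB'', rfl⟩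
    · simp only [List.map_cons, List.sum_cons, List.length_cons]
      omega
    · simp only [List.map_cons, List.sum_cons, ih hB'']
      omega

theorem mem_rpowTerms {s : ℝ} {L : List (Fin d)} {t : Term} (ht : t ∈ rpowTerms s L) :
    t.2.length ≤ L.length ∧ (t.2.map List.length).sum = L.length := by
  induction L generalizing t with
  | nil => simp_all [rpowTerms]
  | cons i L ih =>
    obtain ⟨t₀, ht₀, ht⟩ := List.mem_flatMap.1 ht
    obtain ⟨hlen, hsum⟩ := ih ht₀
    simp only [pderivTerm, List.mem_cons, List.mem_map] at ht
    rcases ht with rfl | ⟨B', hB', rfl⟩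
    · simp only [List.length_cons, List.length_nil, List.map_cons, List.sum_cons, hsum]
      omega
    · have hlen' := length_of_mem_leibnizTerms hB'
      have hsum' := sum_length_of_mem_leibnizTerms hB'
      simp only [List.length_cons]
      omega

section Smooth

variable {U : Set (EuclideanSpace ℝ (Fin d))} {φ : EuclideanSpace ℝ (Fin d) → ℝ}
  {x : EuclideanSpace ℝ (Fin d)}

theorem ContDiffOn.prodPDeriv (hU : IsOpen U) (hφ : ContDiffOn ℝ ∞ φ U)
    (B : List (List (Fin d))) : ContDiffOn ℝ ∞ (prodPDeriv φ B) U := by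
  induction B with
  | nil => exact contDiffOn_const
  | cons β B ih => exact (hφ.pderivList hU β).mul ih

theorem ContDiffOn.termValue (hU : IsOpen U) (hφ : ContDiffOn ℝ ∞ φ U) (hne : ∀ y ∈ U, φ y ≠ 0)
    (s : ℝ) (t : Term) : ContDiffOn ℝ ∞ (termValue φ s t) U :=
  contDiffOn_const.mul ((hφ.rpow_const_of_ne hne).mul (hφ.prodPDeriv hU t.2))

theorem ContDiffOn.termsValue (hU : IsOpen U) (hφ : ContDiffOn ℝ ∞ φ U) (hne : ∀ y ∈ U, φ y ≠ 0)
    (s : ℝ) (T : List Term) : ContDiffOn ℝ ∞ (termsValue φ s T) U := by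
  induction T with
  | nil => exact contDiffOn_const
  | cons t T ih => exact (hφ.termValue hU hne s t).add ih

theorem pderivI_prodPDeriv (hU : IsOpen U) (hφ : ContDiffOn ℝ ∞ φ U) (hx : x ∈ U) (i : Fin d)
    (B : List (List (Fin d))) :
    pderivI i (prodPDeriv φ B) x = ((leibnizTerms i B).map fun B' => prodPDeriv φ B' x).sum := by
  induction B with
  | nil =>
    change pderivI i (fun _ => (1 : ℝ)) x = 0
    simp [pderivI]
  | cons β B ih =>
    have hβ := ((hφ.pderivList hU β).differentiableOn (by simp)).differentiableAt (hU.mem_nhds hx)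
    have hB := ((hφ.prodPDeriv hU B).differentiableOn (by simp)).differentiableAt (hU.mem_nhds hx)
    change pderivI i (fun y => pderivList β φ y * prodPDeriv φ B y) x = _
    rw [pderivI_mul hβ hB, ih, leibnizTerms, List.map_cons, List.sum_cons, List.map_map,
      ← List.sum_map_mul_left]
    rfl

theorem pderivI_termValue (hU : IsOpen U) (hφ : ContDiffOn ℝ ∞ φ U) (hne : ∀ y ∈ U, φ y ≠ 0)
    (hx : x ∈ U) (s : ℝ) (i : Fin d) (t : Term) :
    pderivI i (termValue φ s t) x = termsValue φ s (pderivTerm s i t) x := by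
  obtain ⟨c, B⟩ := t
  have hφx := (hφ.differentiableOn (by simp)).differentiableAt (hU.mem_nhds hx)
  have hB := ((hφ.prodPDeriv hU B).differentiableOn (by simp)).differentiableAt (hU.mem_nhds hx)
  have hpow := hφx.rpow_const (p := s - B.length) (Or.inl (hne x hx))
  have hleibniz : ((leibnizTerms i B).map fun B' => termValue φ s (c, B') x)
      = (leibnizTerms i B).map fun B' => c * (φ x ^ (s - B.length) * prodPDeriv φ B' x) :=
    List.map_congr_left fun B' hB' => by simp only [termValue, length_of_mem_leibnizTerms hB']
  change pderivI i (fun y => c * (φ y ^ (s - B.length) * prodPDeriv φ B y)) x = _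
  rw [pderivI_const_mul (hpow.fun_mul hB), pderivI_mul hpow hB, pderivI_rpow_const hφx (hne x hx),
    pderivI_prodPDeriv hU hφ hx]
  simp only [termsValue, pderivTerm, List.map_cons, List.sum_cons, List.map_map, Function.comp_def,
    hleibniz, List.sum_map_mul_left]
  rw [termValue, List.length_cons, Nat.cast_succ,
    show s - (B.length + 1 : ℝ) = s - B.length - 1 by ring]
  change _ = _ * (_ * (pderivI i φ x * prodPDeriv φ B x)) + _
  ring

theorem pderivI_termsValue (hU : IsOpen U) (hφ : ContDiffOn ℝ ∞ φ U) (hne : ∀ y ∈ U, φ y ≠ 0)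
    (hx : x ∈ U) (s : ℝ) (i : Fin d) (T : List Term) :
    pderivI i (termsValue φ s T) x = termsValue φ s (T.flatMap (pderivTerm s i)) x := by
  induction T with
  | nil =>
    change pderivI i (fun _ => (0 : ℝ)) x = 0
    simp [pderivI]
  | cons t T ih =>
    have ht := ((hφ.termValue hU hne s t).differentiableOn (by simp)).differentiableAt
      (hU.mem_nhds hx)
    have hT := ((hφ.termsValue hU hne s T).differentiableOn (by simp)).differentiableAt
      (hU.mem_nhds hx)
    change pderivI i (fun y => termValue φ s t y + termsValue φ s T y) x = _
    rw [pderivI_add ht hT, pderivI_termValue hU hφ hne hx, ih, List.flatMap_cons]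
    simp only [termsValue, List.map_append, List.sum_append]

theorem pderivList_rpow_eqOn (hU : IsOpen U) (hφ : ContDiffOn ℝ ∞ φ U) (hne : ∀ y ∈ U, φ y ≠ 0)
    (s : ℝ) (L : List (Fin d)) :
    Set.EqOn (pderivList L fun y => φ y ^ s) (termsValue φ s (rpowTerms s L)) U := by
  induction L with
  | nil => intro y _; simp [termsValue, termValue, rpowTerms, prodPDeriv]
  | cons i L ih =>
    intro y hy
    rw [pderivList_cons, pderivI_congr_of_eqOn hU ih hy, pderivI_termsValue hU hφ hne hy]
    rfl

end Smooth

noncomputable def coeffNorm (T : List Term) : ℝ :=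
  (T.map fun t => |t.1|).sum

theorem coeffNorm_cons (t : Term) (T : List Term) : coeffNorm (t :: T) = |t.1| + coeffNorm T :=
  List.sum_cons

theorem coeffNorm_pderivTerm_le (s : ℝ) (i : Fin d) (t : Term) :
    coeffNorm (pderivTerm s i t) ≤ (|s| + 2 * t.2.length) * |t.1| := by
  have hs : |s - t.2.length| ≤ |s| + t.2.length := (abs_sub _ _).trans (by simp)
  simp only [coeffNorm, pderivTerm, List.map_cons, List.sum_cons, List.map_map, Function.comp_def,
    List.map_const', List.sum_replicate, length_leibnizTerms, abs_mul, nsmul_eq_mul]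
  nlinarith [abs_nonneg t.1]

theorem coeffNorm_flatMap_pderivTerm_le {n : ℕ} (s : ℝ) (i : Fin d) (T : List Term)
    (hT : ∀ t ∈ T, t.2.length ≤ n) :
    coeffNorm (T.flatMap (pderivTerm s i)) ≤ (|s| + 2 * n) * coeffNorm T := by
  induction T with
  | nil => simp [coeffNorm]
  | cons t T ih =>
    have ht := coeffNorm_pderivTerm_le s i t
    have ih := ih fun t' ht' => hT t' (List.mem_cons_of_mem _ ht')
    have hn : (t.2.length : ℝ) ≤ n := by exact_mod_cast hT t List.mem_cons_self
    have hsplit : coeffNorm ((t :: T).flatMap (pderivTerm s i))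
        = coeffNorm (pderivTerm s i t) + coeffNorm (T.flatMap (pderivTerm s i)) := by
      simp only [coeffNorm, List.flatMap_cons, List.map_append, List.sum_append]
    rw [hsplit, coeffNorm_cons]
    nlinarith [abs_nonneg t.1]

theorem coeffNorm_rpowTerms_le (s : ℝ) (L : List (Fin d)) :
    coeffNorm (rpowTerms s L) ≤ (|s| + 2 * L.length) ^ L.length := by
  induction L with
  | nil => simp [coeffNorm, rpowTerms]
  | cons i L ih =>
    calc coeffNorm (rpowTerms s (i :: L))
        ≤ (|s| + 2 * L.length) * coeffNorm (rpowTerms s L) :=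
          coeffNorm_flatMap_pderivTerm_le s i _ fun t ht => (mem_rpowTerms ht).1
      _ ≤ (|s| + 2 * L.length) * (|s| + 2 * L.length) ^ L.length := by gcongr
      _ ≤ (|s| + 2 * (i :: L).length) ^ (i :: L).length := by
          rw [← pow_succ', List.length_cons]
          gcongr
          simp

variable {φ : EuclideanSpace ℝ (Fin d) → ℝ} {x : EuclideanSpace ℝ (Fin d)} {r : ℝ}

theorem abs_prodPDeriv_le (B : List (List (Fin d)))
    (hB : ∀ β ∈ B, |pderivList β φ x| ≤ φ x * r ^ β.length) :
    |prodPDeriv φ B x| ≤ φ x ^ B.length * r ^ (B.map List.length).sum := by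
  induction B with
  | nil => simp [prodPDeriv]
  | cons β B ih =>
    have hβ := hB β List.mem_cons_self
    have ih := ih fun β' hβ' => hB β' (List.mem_cons_of_mem _ hβ')
    calc |prodPDeriv φ (β :: B) x| = |pderivList β φ x| * |prodPDeriv φ B x| := abs_mul _ _
      _ ≤ φ x * r ^ β.length * (φ x ^ B.length * r ^ (B.map List.length).sum) :=
          mul_le_mul hβ ih (abs_nonneg _) ((abs_nonneg _).trans hβ)
      _ = φ x ^ (β :: B).length * r ^ ((β :: B).map List.length).sum := by
          simp only [List.length_cons, List.map_cons, List.sum_cons, pow_succ, pow_add]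
          ring

theorem abs_termValue_le (hφx : 0 < φ x) (s : ℝ) (t : Term)
    (ht : ∀ β ∈ t.2, |pderivList β φ x| ≤ φ x * r ^ β.length) :
    |termValue φ s t x| ≤ |t.1| * r ^ (t.2.map List.length).sum * φ x ^ s := by
  have hpow : φ x ^ (s - t.2.length) * φ x ^ t.2.length = φ x ^ s := by
    rw [Real.rpow_sub_natCast hφx.ne', div_mul_cancel₀ _ (pow_ne_zero _ hφx.ne')]
  calc |termValue φ s t x| = |t.1| * (φ x ^ (s - t.2.length) * |prodPDeriv φ t.2 x|) := by
        rw [termValue, abs_mul, abs_mul, abs_of_pos (Real.rpow_pos_of_pos hφx _)]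
    _ ≤ |t.1| * (φ x ^ (s - t.2.length)
          * (φ x ^ t.2.length * r ^ (t.2.map List.length).sum)) := by
        gcongr
        exact abs_prodPDeriv_le t.2 ht
    _ = |t.1| * r ^ (t.2.map List.length).sum * φ x ^ s := by
        rw [← hpow]
        ring

theorem abs_termsValue_le (hφx : 0 < φ x) (s : ℝ) (n : ℕ) (T : List Term)
    (hsum : ∀ t ∈ T, (t.2.map List.length).sum = n)
    (hbound : ∀ t ∈ T, ∀ β ∈ t.2, |pderivList β φ x| ≤ φ x * r ^ β.length) :
    |termsValue φ s T x| ≤ coeffNorm T * r ^ n * φ x ^ s := by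
  induction T with
  | nil => simp [termsValue, coeffNorm]
  | cons t T ih =>
    have ht := abs_termValue_le hφx s t (hbound t List.mem_cons_self)
    rw [hsum t List.mem_cons_self] at ht
    have ih := ih (fun t' ht' => hsum t' (List.mem_cons_of_mem _ ht'))
      (fun t' ht' => hbound t' (List.mem_cons_of_mem _ ht'))
    calc |termsValue φ s (t :: T) x| = |termValue φ s t x + termsValue φ s T x| := rfl
      _ ≤ |termValue φ s t x| + |termsValue φ s T x| := abs_add_le _ _
      _ ≤ |t.1| * r ^ n * φ x ^ s + coeffNorm T * r ^ n * φ x ^ s := add_le_add ht ih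
      _ = coeffNorm (t :: T) * r ^ n * φ x ^ s := by
          rw [coeffNorm_cons]
          ring

theorem abs_pderivList_rpow_le {U : Set E} (hU : IsOpen U) (hφ : ContDiffOn ℝ ∞ φ U)
    (hpos : ∀ y ∈ U, 0 < φ y) (hx : x ∈ U) (hr : 0 ≤ r) (s : ℝ) (L : List (Fin d))
    (hbound : ∀ β : List (Fin d), β.length ≤ L.length → |pderivList β φ x| ≤ φ x * r ^ β.length) :
    |pderivList L (fun y => φ y ^ s) x|
      ≤ (|s| + 2 * L.length) ^ L.length * r ^ L.length * φ x ^ s := by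
  rw [pderivList_rpow_eqOn hU hφ (fun y hy => (hpos y hy).ne') s L hx]
  calc |termsValue φ s (rpowTerms s L) x|
      ≤ coeffNorm (rpowTerms s L) * r ^ L.length * φ x ^ s :=
        abs_termsValue_le (hpos x hx) s _ _ (fun t ht => (mem_rpowTerms ht).2)
          fun t ht β hβ => hbound β
            ((List.le_sum_of_mem (List.mem_map_of_mem hβ)).trans (mem_rpowTerms ht).2.le)
    _ ≤ (|s| + 2 * L.length) ^ L.length * r ^ L.length * φ x ^ s := by
        have := Real.rpow_pos_of_pos (hpos x hx) s
        gcongr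
        exact coeffNorm_rpowTerms_le s L

end RpowExpansion

theorem le_one_add_mul_div_pow {κ μ γ y p a : ℝ} {m : ℕ} (hκ : 0 < κ) (hy : 0 < y)
    (hm : 1 ≤ m) (hlow : κ * y ^ γ ≤ p) (ha : a ≤ μ * y ^ (γ - m)) :
    a ≤ (1 + p) * (max 1 (μ / κ) / y) ^ m := by
  set M := max 1 (μ / κ)
  have hM : μ / κ ≤ M := le_max_right _ _
  have hM1 : 1 ≤ M := le_max_left _ _
  have hκy : 0 ≤ κ * y ^ γ := by positivity
  calc a ≤ μ * y ^ (γ - m) := ha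
    _ = μ / κ * (κ * y ^ γ) / y ^ m := by
        rw [Real.rpow_sub_natCast hy.ne']
        field_simp
    _ ≤ M * (1 + p) / y ^ m := by
        gcongr
        linarith
    _ ≤ M ^ m * (1 + p) / y ^ m := by
        gcongr
        · linarith
        · exact le_self_pow₀ hM1 (by omega)
    _ = (1 + p) * (M / y) ^ m := by
        rw [div_pow]
        ring

theorem abs_pderivList_one_add_le {d K : ℕ} {γ κ μ : ℝ} {ψ : EuclideanSpace ℝ (Fin d) → ℝ}
    {ξ : EuclideanSpace ℝ (Fin d)} (hκ : 0 < κ)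
    (hsmooth : ContDiffOn ℝ ∞ ψ {ξ : EuclideanSpace ℝ (Fin d) | ξ ≠ 0}) (hξ : ξ ≠ 0)
    (hlow : κ * ‖ξ‖ ^ γ ≤ ψ ξ)
    (hup : ∀ α : Fin d → ℕ, (∑ i, α i) ≤ K →
      |mderiv α ψ ξ| ≤ μ * ‖ξ‖ ^ (γ - ((∑ i, α i : ℕ) : ℝ)))
    (β : List (Fin d)) (hβ : β.length ≤ K) :
    |pderivList β (fun η => 1 + ψ η) ξ| ≤ (1 + ψ ξ) * (max 1 (μ / κ) / ‖ξ‖) ^ β.length := by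
  obtain rfl | hβ0 := eq_or_ne β []
  · have : 0 ≤ κ * ‖ξ‖ ^ γ := by positivity
    simp [abs_of_pos (by linarith : 0 < 1 + ψ ξ)]
  have hcount : ∑ i, β.count i = β.length := by
    simpa using
      Multiset.sum_count_eq_card (s := Finset.univ) (m := (β : Multiset (Fin d))) (by simp)
  rw [pderivList_const_add hβ0, pderivList_eqOn_mderiv_count isOpen_ne hsmooth β hξ]
  refine le_one_add_mul_div_pow hκ (norm_pos_iff.2 hξ) (List.length_pos_iff.2 hβ0) hlow ?_
  have h := hup _ (hcount ▸ hβ)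
  rwa [hcount] at h

theorem pow_mul_div_pow_le {a M y : ℝ} {n K : ℕ} (ha : 0 ≤ a) (hM : 1 ≤ M) (hy : 0 < y)
    (hn : n ≤ K) : (a + 2 * n) ^ n * (M / y) ^ n ≤ ((a + 2 * K + 1) * M) ^ K * y ^ (-(n : ℝ)) := by
  have hbase : (a + 2 * n) * M ≤ (a + 2 * K + 1) * M := by
    have : (n : ℝ) ≤ K := by exact_mod_cast hn
    exact mul_le_mul_of_nonneg_right (by linarith) (by linarith)
  have hone : 1 ≤ (a + 2 * K + 1) * M := one_le_mul_of_one_le_of_one_le (by linarith) hM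
  calc (a + 2 * n) ^ n * (M / y) ^ n = ((a + 2 * n) * M) ^ n * (y ^ n)⁻¹ := by
        rw [div_pow, mul_pow]
        ring
    _ ≤ ((a + 2 * K + 1) * M) ^ K * (y ^ n)⁻¹ := by
        gcongr
        exact (pow_le_pow_left₀ (by positivity) hbase n).trans (pow_le_pow_right₀ hone hn)
    _ = ((a + 2 * K + 1) * M) ^ K * y ^ (-(n : ℝ)) := by
        rw [Real.rpow_neg hy.le, Real.rpow_natCast]

theorem mderiv_one_add_symbol_rpow_bound_general
    (d : ℕ) (γ κ μ : ℝ) (hκ : 0 < κ)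
    (ψ : EuclideanSpace ℝ (Fin d) → ℝ)
    (hpos : ∀ ξ, 0 < ψ ξ)
    (hsmooth : ContDiffOn ℝ (⊤ : ℕ∞) ψ {ξ : EuclideanSpace ℝ (Fin d) | ξ ≠ 0})
    (hlow : ∀ ξ : EuclideanSpace ℝ (Fin d), ξ ≠ 0 → κ * ‖ξ‖ ^ γ ≤ ψ ξ)
    (hup : ∀ α : Fin d → ℕ, (∑ i, α i) ≤ d / 2 + 1 →
      ∀ ξ : EuclideanSpace ℝ (Fin d), ξ ≠ 0 →
        |mderiv α ψ ξ| ≤ μ * ‖ξ‖ ^ (γ - ((∑ i, α i : ℕ) : ℝ)))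
    (s : ℝ) :
    ∃ C : ℝ, 0 < C ∧ ∀ α : Fin d → ℕ, (∑ i, α i) ≤ d / 2 + 1 →
      ∀ ξ : EuclideanSpace ℝ (Fin d), ξ ≠ 0 →
        |mderiv α (fun η : EuclideanSpace ℝ (Fin d) => (1 + ψ η) ^ s) ξ|
          ≤ C * ‖ξ‖ ^ (-((∑ i, α i : ℕ) : ℝ)) * (1 + ψ ξ) ^ s := by
  set K := d / 2 + 1
  set M := max 1 (μ / κ)
  refine ⟨((|s| + 2 * K + 1) * M) ^ K, by positivity, fun α hα ξ hξ => ?_⟩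
  rw [← length_multiIndexList] at hα ⊢
  rw [mderiv_eq_pderivList]
  set n := (multiIndexList α).length
  have hφ : 0 < (1 + ψ ξ) ^ s := Real.rpow_pos_of_pos (by linarith [hpos ξ]) s
  calc _ ≤ (|s| + 2 * n) ^ n * (M / ‖ξ‖) ^ n * (1 + ψ ξ) ^ s :=
        abs_pderivList_rpow_le isOpen_ne (contDiffOn_const.add hsmooth)
          (fun y _ => by linarith [hpos y]) hξ (by positivity) s _ fun β hβ =>
            abs_pderivList_one_add_le hκ hsmooth hξ (hlow ξ hξ) (fun α' hα' => hup α' hα' ξ hξ) β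
              (hβ.trans hα)
    _ ≤ _ := mul_le_mul_of_nonneg_right
        (pow_mul_div_pow_le (abs_nonneg s) (le_max_left _ _) (norm_pos_iff.2 hξ) hα) hφ.le

/-- If `ψ ∈ 𝔐_γ(ℝ^d)` (positive, `ψ(ξ) ≥ κ|ξ|^γ`, and
`|∂^α ψ(ξ)| ≤ μ |ξ|^{γ-|α|}` for `|α| ≤ ⌊d/2⌋ + 1`), then for any `s ∈ ℝ` there is a
constant `C > 0` such that `|∂^α ((1 + ψ(ξ))^s)| ≤ C |ξ|^{-|α|} (1 + ψ(ξ))^s`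
for all `ξ ≠ 0` and `|α| ≤ ⌊d/2⌋ + 1`. -/
theorem mderiv_one_add_symbol_rpow_bound
    (d : ℕ) (γ κ μ : ℝ) (hγ : 0 < γ) (hκ : 0 < κ) (hμ : 0 < μ)
    (ψ : EuclideanSpace ℝ (Fin d) → ℝ)
    (hpos : ∀ ξ, 0 < ψ ξ)
    (hsmooth : ContDiffOn ℝ (⊤ : ℕ∞) ψ {ξ : EuclideanSpace ℝ (Fin d) | ξ ≠ 0})
    (hlow : ∀ ξ : EuclideanSpace ℝ (Fin d), ξ ≠ 0 → κ * ‖ξ‖ ^ γ ≤ ψ ξ)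
    (hup : ∀ α : Fin d → ℕ, (∑ i, α i) ≤ d / 2 + 1 →
      ∀ ξ : EuclideanSpace ℝ (Fin d), ξ ≠ 0 →
        |mderiv α ψ ξ| ≤ μ * ‖ξ‖ ^ (γ - ((∑ i, α i : ℕ) : ℝ)))
    (s : ℝ) :
    ∃ C : ℝ, 0 < C ∧ ∀ α : Fin d → ℕ, (∑ i, α i) ≤ d / 2 + 1 →
      ∀ ξ : EuclideanSpace ℝ (Fin d), ξ ≠ 0 →
        |mderiv α (fun η : EuclideanSpace ℝ (Fin d) => (1 + ψ η) ^ s) ξ|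
          ≤ C * ‖ξ‖ ^ (-((∑ i, α i : ℕ) : ℝ)) * (1 + ψ ξ) ^ s :=
  mderiv_one_add_symbol_rpow_bound_general d γ κ μ hκ ψ hpos hsmooth hlow hup s
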